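/- Let χ be an even primitive Dirichlet character modulo q with q > 1, let c be a positive multiple of q, and let d be an integer coprime to c. The Dirichlet series L(s, E_{χ,1}, d/c) := Σ_{m≥1} (Σ_{ab=m} χ(a))·e(md/c)·m^{−s}, absolutely convergent for Re(s) > 1, extends to a meromorphic function on all of ℂ that is holomorphic except for a simple pole at s = 1 with residue τ(χ)·conj(χ)(d)·L(1, conj(χ))/c, where conj(χ) is the complex conjugate character and L(·, conj(χ)) its Dirichlet L-function. -/

import Mathlib

/-!
Write `L(s) = ∑_{a,b ≥ 1} χ(a) e(abd/c) (ab)^{-s}` and split `a` into residue classes `α mod c`;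
since `q ∣ c`, `χ(a) = χ(α)` and `e(abd/c) = e(αbd/c)`, so `L(s) = ∑_α χ(α) H_α(s) Z_α(s)` with
`H_α(s) = ∑_{a ≡ α} a^{-s}` and `Z_α(s) = ∑_b e(dαb/c) b^{-s}`, both L-functions of functions on
`ℤ/cℤ`. These continue to `ℂ` with at most a simple pole at `s = 1`; `H_α` has residue `1/c`, `Z_α`
is entire for `α ≠ 0` (`d` is a unit mod `c`), and the `α = 0` term vanishes as `χ(0) = 0`.
So the residue is `A(1)/c` with `A(s) = ∑_α χ(α) Z_α(s) = ∑_b W(db) b^{-s}`, where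
`W(γ) = ∑_{α mod c} χ(α) e(αγ/c)`. Shifting `α` by `q` shows `W(db) = 0` unless `r = c/q` divides
`b`, and `W(d r k) = r χ̄(dk) τ(χ)` because `χ` is primitive. Hence
`A(s) = r^{1-s} τ(χ) χ̄(d) L(s, χ̄)` for `Re s > 1`, and continuity of both sides gives `A(1)`.
-/

open Finset Complex Real Filter

/-- The coefficient `∑_{ab=m} χ a` of the Eisenstein newform `E_{χ,1}`. -/
noncomputable def eisCoef {q : ℕ} (χ : DirichletCharacter ℂ q) (m : ℕ) : ℂ :=
  ∑ ab ∈ m.divisorsAntidiagonal, χ (ab.1 : ZMod q)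

/-- The Voronoĭ `L`-series `L(s, E_{χ,1}, x/c) = ∑_{m≥1} (∑_{ab=m} χ a) e(mx/c) m^{-s}`. -/
noncomputable def voronoiL {q : ℕ} (χ : DirichletCharacter ℂ q) (c : ℕ) (x : ℤ) (s : ℂ) : ℂ :=
  ∑' m : ℕ,
    eisCoef χ m * Complex.exp (2 * π * I * ((m : ℂ) * (x : ℂ) / (c : ℂ))) * (m : ℂ) ^ (-s)

/-- The Gauss sum `τ(χ) = ∑_{d mod q} χ d · e(d/q)`. -/
noncomputable def gaussSumOf {q : ℕ} (χ : DirichletCharacter ℂ q) : ℂ :=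
  ∑ d ∈ Finset.range q, χ (d : ZMod q) * Complex.exp (2 * π * I * ((d : ℂ) / (q : ℂ)))

open ZMod (stdAddChar)
open scoped Topology LSeries.notation

section ZModSums

variable {M : Type*} [AddCommMonoid M]

lemma sum_range_natCast_zmod (N : ℕ) [NeZero N] (F : ZMod N → M) :
    ∑ i ∈ range N, F i = ∑ u : ZMod N, F u :=
  sum_nbij' (fun i ↦ (i : ZMod N)) ZMod.val (by simp) (by simp [ZMod.val_lt])
    (fun i hi ↦ by simp [ZMod.val_natCast_of_lt (mem_range.mp hi)]) (by simp) (fun _ _ ↦ rfl)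

lemma sum_range_mul_natCast_zmod (N : ℕ) [NeZero N] (F : ZMod N → M) (r : ℕ) :
    ∑ i ∈ range (r * N), F i = r • ∑ u : ZMod N, F u := by
  induction r with
  | zero => simp
  | succ r ih =>
    rw [add_mul, one_mul, sum_range_add, ih, succ_nsmul, ← sum_range_natCast_zmod N F]
    simp

lemma sum_zmod_cast_of_dvd {q c : ℕ} [NeZero q] [NeZero c] (hqc : q ∣ c) (F : ZMod q → M) :
    ∑ α : ZMod c, F (ZMod.cast α) = (c / q) • ∑ u : ZMod q, F u := by
  rw [← sum_range_natCast_zmod c, ← sum_range_mul_natCast_zmod q, Nat.div_mul_cancel hqc]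
  exact sum_congr rfl fun i _ ↦ by rw [ZMod.cast_natCast hqc]

end ZModSums

lemma ZMod.stdAddChar_natCast_div_mul {q c : ℕ} [NeZero q] [NeZero c] (hqc : q ∣ c)
    (x : ZMod c) : stdAddChar (((c / q : ℕ) : ZMod c) * x) = stdAddChar (ZMod.cast x : ZMod q) := by
  obtain ⟨j, rfl⟩ := ZMod.intCast_surjective x
  obtain ⟨r, rfl⟩ := hqc
  have hr : (r : ℂ) ≠ 0 := Nat.cast_ne_zero.mpr (right_ne_zero_of_mul (NeZero.ne (q * r)))
  have hq : (q : ℂ) ≠ 0 := NeZero.ne _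
  rw [Nat.mul_div_cancel_left r (NeZero.pos q), ZMod.cast_intCast (dvd_mul_right q r),
    ← Int.cast_natCast, ← Int.cast_mul, stdAddChar_coe, stdAddChar_coe]
  congr 1
  push_cast
  field_simp

section InflatedGaussSum

variable {q c : ℕ} [NeZero c] (χ : DirichletCharacter ℂ q)

noncomputable def inflatedGaussSum (γ : ZMod c) : ℂ :=
  ∑ α : ZMod c, χ (ZMod.cast α) * stdAddChar (α * γ)

variable {χ}

lemma inflatedGaussSum_eq_zero (hqc : q ∣ c) {γ : ZMod c}
    (hγ : stdAddChar ((q : ZMod c) * γ) ≠ 1) : inflatedGaussSum χ γ = 0 := by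
  have hshift : stdAddChar ((q : ZMod c) * γ) * inflatedGaussSum χ γ = inflatedGaussSum χ γ := by
    conv_rhs => rw [inflatedGaussSum, ← Equiv.sum_comp (Equiv.addRight (q : ZMod c))]
    rw [inflatedGaussSum, mul_sum]
    refine sum_congr rfl fun α _ ↦ ?_
    rw [Equiv.coe_addRight, ZMod.cast_add hqc, ZMod.cast_natCast hqc, ZMod.natCast_self, add_zero,
      add_mul, AddChar.map_add_eq_mul]
    ring
  exact (mul_left_eq_self₀.mp hshift).resolve_left hγ

lemma inflatedGaussSum_natCast_div_mul [NeZero q] (hqc : q ∣ c) (hχ : χ.IsPrimitive) (γ : ZMod c) :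
    inflatedGaussSum χ (((c / q : ℕ) : ZMod c) * γ) =
      (c / q : ℕ) * (χ⁻¹ (ZMod.cast γ) * gaussSum χ stdAddChar) := by
  have hterm : ∀ α : ZMod c, χ (ZMod.cast α) * stdAddChar (α * (((c / q : ℕ) : ZMod c) * γ)) =
      χ (ZMod.cast α) * stdAddChar.mulShift (ZMod.cast γ : ZMod q) (ZMod.cast α) := fun α ↦ by
    rw [mul_left_comm, ZMod.stdAddChar_natCast_div_mul hqc, ZMod.cast_mul hqc,
      mul_comm (ZMod.cast α : ZMod q)]
    rfl
  rw [inflatedGaussSum, Fintype.sum_congr _ _ hterm,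
    sum_zmod_cast_of_dvd hqc fun u : ZMod q ↦ χ u * stdAddChar.mulShift (ZMod.cast γ) u,
    nsmul_eq_mul]
  exact congrArg _ (gaussSum_mulShift_of_isPrimitive _ hχ _)

end InflatedGaussSum

lemma LSeries_eq_cpow_neg_mul_LSeries_comp_mul {f : ℕ → ℂ} {r : ℕ} (hr : r ≠ 0)
    (hf : ∀ n, ¬ r ∣ n → f n = 0) (s : ℂ) :
    LSeries f s = (r : ℂ) ^ (-s) * LSeries (fun k ↦ f (r * k)) s := by
  have hsupp : Function.support (LSeries.term f s) ⊆ Set.range (r * ·) := by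
    intro n hn
    by_contra hnr
    exact hn (by simp [LSeries.term, hf n fun ⟨k, hk⟩ ↦ hnr ⟨k, hk.symm⟩])
  rw [LSeries, ← (mul_right_injective₀ hr).tsum_eq hsupp, LSeries, ← tsum_mul_left]
  congr 1 with k
  rcases eq_or_ne k 0 with rfl | hk
  · simp
  rw [LSeries.term_of_ne_zero (mul_ne_zero hr hk), LSeries.term_of_ne_zero hk, cpow_neg,
    Nat.cast_mul, natCast_mul_natCast_cpow]
  ring

lemma eq_of_continuousAt_of_forall_one_lt_re {E : Type*} [TopologicalSpace E] [T2Space E]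
    {f g : ℂ → E} (hf : ContinuousAt f 1) (hg : ContinuousAt g 1)
    (h : ∀ s : ℂ, 1 < s.re → f s = g s) : f 1 = g 1 := by
  have hlim : Tendsto (fun t : ℝ ↦ (1 + t : ℂ)) (𝓝[>] 0) (𝓝 1) := by
    have : Continuous fun t : ℝ ↦ (1 + t : ℂ) := by fun_prop
    simpa using (this.tendsto 0).mono_left nhdsWithin_le_nhds
  have heq : f ∘ (fun t : ℝ ↦ (1 + t : ℂ)) =ᶠ[𝓝[>] 0] g ∘ (fun t : ℝ ↦ (1 + t : ℂ)) :=
    eventually_nhdsWithin_of_forall fun t ht ↦ h _ (by simpa using ht)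
  exact tendsto_nhds_unique ((hf.tendsto.comp hlim).congr' heq) (hg.tendsto.comp hlim)

section VoronoiSeries

variable {q c : ℕ} [NeZero c] (χ : DirichletCharacter ℂ q) (d : ZMod c)

noncomputable def voronoiCoef (m : ℕ) : ℂ := eisCoef χ m * stdAddChar ((m : ZMod c) * d)

noncomputable def voronoiContinuation (s : ℂ) : ℂ :=
  ∑ α : ZMod c, χ (ZMod.cast α) *
    (ZMod.LFunction (Pi.single α 1) s * ZMod.LFunction (stdAddChar.mulShift (d * α)) s)

noncomputable def inflatedGaussLFunction (s : ℂ) : ℂ :=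
  ∑ α : ZMod c, χ (ZMod.cast α) * ZMod.LFunction (stdAddChar.mulShift (d * α)) s

lemma voronoiCoef_eq_sum_convolution (hqc : q ∣ c) :
    voronoiCoef χ d = ∑ α : ZMod c, χ (ZMod.cast α) •
      ((fun n : ℕ ↦ (Pi.single α 1 : ZMod c → ℂ) n) ⍟
        fun n : ℕ ↦ stdAddChar.mulShift (d * α) n) := by
  funext m
  simp only [Finset.sum_apply, Pi.smul_apply, smul_eq_mul, LSeries.convolution_def, mul_sum]
  rw [sum_comm, voronoiCoef, eisCoef, sum_mul]
  refine sum_congr rfl fun p hp ↦ ?_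
  simp only [Pi.single_apply, AddChar.mulShift_apply, ite_mul, one_mul, zero_mul, mul_ite,
    mul_zero, sum_ite_eq, mem_univ, if_true]
  rw [ZMod.cast_natCast hqc, ← (Nat.mem_divisorsAntidiagonal.mp hp).1]
  push_cast
  ring_nf

lemma LSeriesSummable_voronoiCoef (hqc : q ∣ c) {s : ℂ} (hs : 1 < s.re) :
    LSeriesSummable (voronoiCoef χ d) s := by
  rw [voronoiCoef_eq_sum_convolution χ d hqc]
  exact .sum fun α _ ↦ ((ZMod.LSeriesSummable_of_one_lt_re _ hs).convolution
    (ZMod.LSeriesSummable_of_one_lt_re _ hs)).smul _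

lemma LSeries_voronoiCoef (hqc : q ∣ c) {s : ℂ} (hs : 1 < s.re) :
    LSeries (voronoiCoef χ d) s = voronoiContinuation χ d s := by
  rw [voronoiCoef_eq_sum_convolution χ d hqc, LSeries_sum fun α _ ↦
    ((ZMod.LSeriesSummable_of_one_lt_re _ hs).convolution
      (ZMod.LSeriesSummable_of_one_lt_re _ hs)).smul _]
  refine sum_congr rfl fun α _ ↦ ?_
  rw [LSeries_smul, LSeries_convolution' (ZMod.LSeriesSummable_of_one_lt_re _ hs)
    (ZMod.LSeriesSummable_of_one_lt_re _ hs), ZMod.LFunction_eq_LSeries _ hs,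
    ZMod.LFunction_eq_LSeries _ hs]

lemma differentiableAt_voronoiContinuation {s : ℂ} (hs : s ≠ 1) :
    DifferentiableAt ℂ (voronoiContinuation χ d) s :=
  .fun_sum fun _ _ ↦ (differentiableAt_const _).mul
    ((ZMod.differentiableAt_LFunction _ s (.inl hs)).mul
      (ZMod.differentiableAt_LFunction _ s (.inl hs)))

lemma differentiable_cast_mul_LFunction_mulShift (hq : 1 < q) (hd : IsUnit d) (α : ZMod c) :
    Differentiable ℂ fun s ↦ χ (ZMod.cast α) * ZMod.LFunction (stdAddChar.mulShift (d * α)) s := by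
  rcases eq_or_ne α 0 with rfl | hα
  · have : Nontrivial (ZMod q) := ZMod.nontrivial_iff.mpr hq.ne'
    simpa only [ZMod.cast_zero, MulChar.map_zero, zero_mul] using differentiable_const 0
  · refine (ZMod.differentiable_LFunction_of_sum_zero ?_).const_mul _
    exact AddChar.sum_eq_zero_of_ne_one
      (ZMod.isPrimitive_stdAddChar c (hd.mul_right_eq_zero.not.mpr hα))

lemma differentiable_inflatedGaussLFunction (hq : 1 < q) (hd : IsUnit d) :
    Differentiable ℂ (inflatedGaussLFunction χ d) :=
  .fun_sum fun α _ ↦ differentiable_cast_mul_LFunction_mulShift χ d hq hd α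

lemma tendsto_sub_one_mul_voronoiContinuation (hq : 1 < q) (hd : IsUnit d) :
    Tendsto (fun s ↦ (s - 1) * voronoiContinuation χ d s) (𝓝[≠] 1)
      (𝓝 (inflatedGaussLFunction χ d 1 / c)) := by
  have hres (α : ZMod c) : Tendsto (fun s ↦ (s - 1) * ZMod.LFunction (Pi.single α 1) s)
      (𝓝[≠] 1) (𝓝 (1 / c)) := by
    simpa [Pi.single_apply, ← sum_div] using ZMod.LFunction_residue_one (Pi.single α (1 : ℂ))
  simp only [voronoiContinuation, inflatedGaussLFunction, mul_sum, sum_div]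
  refine tendsto_finsetSum _ fun α _ ↦ ?_
  convert ((differentiable_cast_mul_LFunction_mulShift χ d hq hd α 1).continuousAt.tendsto.mono_left
    nhdsWithin_le_nhds).mul (hres α) using 2 <;> ring

end VoronoiSeries

section InflatedGaussLFunction

variable {q c : ℕ} [NeZero c] {χ : DirichletCharacter ℂ q} {d : ZMod c}

lemma inflatedGaussSum_mul_natCast_eq_zero (hqc : q ∣ c) (hd : IsUnit d) {n : ℕ}
    (hn : ¬ c / q ∣ n) : inflatedGaussSum χ (d * (n : ZMod c)) = 0 := by
  refine inflatedGaussSum_eq_zero hqc fun h ↦ hn ?_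
  have hqdn : (q : ZMod c) * (d * n) = 0 :=
    ZMod.injective_stdAddChar (h.trans (AddChar.map_zero_eq_one _).symm)
  rw [mul_left_comm, hd.mul_right_eq_zero, ← Nat.cast_mul, ZMod.natCast_eq_zero_iff] at hqdn
  obtain ⟨r, hr⟩ := hqc
  have hq : 0 < q := Nat.pos_of_ne_zero (left_ne_zero_of_mul (hr ▸ NeZero.ne c))
  rw [hr, Nat.mul_div_cancel_left r hq]
  exact Nat.dvd_of_mul_dvd_mul_left hq (hr ▸ hqdn)

lemma inflatedGaussLFunction_eq_LSeries {s : ℂ} (hs : 1 < s.re) :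
    inflatedGaussLFunction χ d s = LSeries (fun n ↦ inflatedGaussSum χ (d * (n : ZMod c))) s := by
  have hcoef : (fun n : ℕ ↦ inflatedGaussSum χ (d * (n : ZMod c))) =
      ∑ α : ZMod c, χ (ZMod.cast α) • fun n : ℕ ↦ stdAddChar.mulShift (d * α) n := by
    funext n
    simp only [inflatedGaussSum, Finset.sum_apply, Pi.smul_apply, smul_eq_mul,
      AddChar.mulShift_apply]
    exact sum_congr rfl fun α _ ↦ by ring_nf
  rw [hcoef, LSeries_sum fun α _ ↦ (ZMod.LSeriesSummable_of_one_lt_re _ hs).smul _]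
  simp only [inflatedGaussLFunction, LSeries_smul, ZMod.LFunction_eq_LSeries _ hs]

lemma inflatedGaussLFunction_eq_of_one_lt_re [NeZero q] (hqc : q ∣ c) (hχ : χ.IsPrimitive)
    (hd : IsUnit d) {s : ℂ} (hs : 1 < s.re) :
    inflatedGaussLFunction χ d s = ((c / q : ℕ) : ℂ) ^ (-s) * (c / q : ℕ) *
      (χ⁻¹ (ZMod.cast d) * gaussSum χ stdAddChar) * DirichletCharacter.LFunction χ⁻¹ s := by
  have hr : c / q ≠ 0 := (Nat.div_pos (Nat.le_of_dvd (NeZero.pos c) hqc) (NeZero.pos q)).ne'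
  have hcoef : (fun k ↦ inflatedGaussSum χ (d * ((c / q * k : ℕ) : ZMod c))) =
      ((c / q : ℕ) * (χ⁻¹ (ZMod.cast d) * gaussSum χ stdAddChar)) • fun k : ℕ ↦ χ⁻¹ k := by
    funext k
    rw [Nat.cast_mul, mul_left_comm, inflatedGaussSum_natCast_div_mul hqc hχ, ZMod.cast_mul hqc,
      ZMod.cast_natCast hqc, map_mul, Pi.smul_apply, smul_eq_mul]
    ring
  rw [inflatedGaussLFunction_eq_LSeries hs, LSeries_eq_cpow_neg_mul_LSeries_comp_mul hr
    (fun n hn ↦ inflatedGaussSum_mul_natCast_eq_zero hqc hd hn), hcoef, LSeries_smul,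
    DirichletCharacter.LFunction_eq_LSeries _ hs]
  ring

lemma inflatedGaussLFunction_one [NeZero q] (hq : 1 < q) (hqc : q ∣ c) (hχ : χ.IsPrimitive)
    (hd : IsUnit d) :
    inflatedGaussLFunction χ d 1 =
      χ⁻¹ (ZMod.cast d) * gaussSum χ stdAddChar * DirichletCharacter.LFunction χ⁻¹ 1 := by
  have hr : ((c / q : ℕ) : ℂ) ≠ 0 := Nat.cast_ne_zero.mpr
    (Nat.div_pos (Nat.le_of_dvd (NeZero.pos c) hqc) (NeZero.pos q)).ne'
  have hχ1 : χ⁻¹ ≠ 1 := by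
    rw [ne_eq, inv_eq_one]
    rintro rfl
    rw [DirichletCharacter.IsPrimitive, DirichletCharacter.conductor_one] at hχ
    omega
  have hcont : ContinuousAt (fun s : ℂ ↦ ((c / q : ℕ) : ℂ) ^ (-s) * (c / q : ℕ) *
      (χ⁻¹ (ZMod.cast d) * gaussSum χ stdAddChar) * DirichletCharacter.LFunction χ⁻¹ s) 1 := by
    have hpow : Continuous fun s : ℂ ↦ ((c / q : ℕ) : ℂ) ^ (-s) :=
      continuous_neg.const_cpow (.inl hr)
    exact ((hpow.mul continuous_const).mul continuous_const).continuousAt.mul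
      (DirichletCharacter.differentiable_LFunction hχ1).continuous.continuousAt
  rw [eq_of_continuousAt_of_forall_one_lt_re
    ((differentiable_inflatedGaussLFunction χ d hq hd).continuous.continuousAt) hcont
    fun s hs ↦ inflatedGaussLFunction_eq_of_one_lt_re hqc hχ hd hs, cpow_neg_one,
    inv_mul_cancel₀ hr, one_mul]

end InflatedGaussLFunction

lemma eisCoef_mul_exp_mul_cpow_neg_eq_term {q : ℕ} (χ : DirichletCharacter ℂ q) (c : ℕ) [NeZero c]
    (d : ℤ) (s : ℂ) (m : ℕ) :
    eisCoef χ m * exp (2 * π * I * ((m : ℂ) * (d : ℂ) / (c : ℂ))) * (m : ℂ) ^ (-s) =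
      LSeries.term (voronoiCoef χ (d : ZMod c)) s m := by
  rcases eq_or_ne m 0 with rfl | hm
  · simp [eisCoef]
  have hexp : exp (2 * π * I * ((m : ℂ) * (d : ℂ) / (c : ℂ))) =
      stdAddChar ((m : ZMod c) * (d : ZMod c)) := by
    rw [show (m : ZMod c) * (d : ZMod c) = ((m * d : ℤ) : ZMod c) by push_cast; rfl,
      ZMod.stdAddChar_coe]
    push_cast
    ring_nf
  rw [LSeries.term_of_ne_zero hm, voronoiCoef, hexp, cpow_neg, div_eq_mul_inv]

lemma gaussSumOf_eq_gaussSum {q : ℕ} [NeZero q] (χ : DirichletCharacter ℂ q) :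
    gaussSumOf χ = gaussSum χ stdAddChar := by
  rw [gaussSumOf, gaussSum, ← sum_range_natCast_zmod q]
  refine sum_congr rfl fun i _ ↦ ?_
  rw [ZMod.stdAddChar_apply, ZMod.toCircle_natCast, mul_div_assoc]

theorem stmt_14_general (q : ℕ) [NeZero q] (hq : 1 < q) (χ : DirichletCharacter ℂ q)
    (hprim : χ.IsPrimitive)
    (c : ℕ) (hc : 0 < c) (hqc : q ∣ c) (d : ℤ) (hd : IsCoprime d (c : ℤ)) :
    (∀ s : ℂ, 1 < s.re → Summable fun m : ℕ =>
      ‖eisCoef χ m * Complex.exp (2 * π * I * ((m : ℂ) * (d : ℂ) / (c : ℂ))) *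
        (m : ℂ) ^ (-s)‖) ∧
    ∃ f : ℂ → ℂ,
      (∀ s : ℂ, 1 < s.re → f s = voronoiL χ c d s) ∧
      (∀ s : ℂ, s ≠ 1 → DifferentiableAt ℂ f s) ∧
      Tendsto (fun s : ℂ => (s - 1) * f s) (nhdsWithin 1 {(1 : ℂ)}ᶜ)
        (nhds (gaussSumOf χ * (starRingEnd ℂ) (χ (d : ZMod q)) *
          DirichletCharacter.LFunction (χ.ringHomComp (starRingEnd ℂ)) 1 / (c : ℂ))) := by
  have : NeZero c := ⟨hc.ne'⟩
  have hdu : IsUnit (d : ZMod c) := (ZMod.coe_int_isUnit_iff_isCoprime d c).mpr hd.symm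
  have hterm := eisCoef_mul_exp_mul_cpow_neg_eq_term χ c d
  refine ⟨fun s hs ↦ ?_, voronoiContinuation χ (d : ZMod c), fun s hs ↦ ?_,
    fun s hs ↦ differentiableAt_voronoiContinuation χ _ hs, ?_⟩
  · simpa only [hterm] using (LSeriesSummable_voronoiCoef χ _ hqc hs).norm
  · rw [voronoiL, funext (hterm s), ← LSeries, LSeries_voronoiCoef χ _ hqc hs]
  · convert tendsto_sub_one_mul_voronoiContinuation χ _ hq hdu using 2
    rw [inflatedGaussLFunction_one hq hqc hprim hdu, gaussSumOf_eq_gaussSum, ZMod.cast_intCast hqc,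
      starRingEnd_apply, MulChar.star_apply',
      show χ.ringHomComp (starRingEnd ℂ) = χ⁻¹ from MulChar.star_eq_inv χ]
    ring

/-- For `χ` even primitive mod `q > 1`, `q ∣ c`, `gcd(d,c) = 1`, the series
`L(s, E_{χ,1}, d/c)` converges absolutely for `Re s > 1` and extends to a meromorphic function
on `ℂ`, holomorphic away from a simple pole at `s = 1` with residue `τ(χ) χ̄(d) L(1,χ̄)/c`. -/
theorem stmt_14 (q : ℕ) [NeZero q] (hq : 1 < q) (χ : DirichletCharacter ℂ q)
    (hprim : χ.IsPrimitive) (heven : χ (-1) = 1)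
    (c : ℕ) (hc : 0 < c) (hqc : q ∣ c) (d : ℤ) (hd : IsCoprime d (c : ℤ)) :
    (∀ s : ℂ, 1 < s.re → Summable fun m : ℕ =>
      ‖eisCoef χ m * Complex.exp (2 * π * I * ((m : ℂ) * (d : ℂ) / (c : ℂ))) *
        (m : ℂ) ^ (-s)‖) ∧
    ∃ f : ℂ → ℂ,
      (∀ s : ℂ, 1 < s.re → f s = voronoiL χ c d s) ∧
      (∀ s : ℂ, s ≠ 1 → DifferentiableAt ℂ f s) ∧
      Tendsto (fun s : ℂ => (s - 1) * f s) (nhdsWithin 1 {(1 : ℂ)}ᶜ)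
        (nhds (gaussSumOf χ * (starRingEnd ℂ) (χ (d : ZMod q)) *
          DirichletCharacter.LFunction (χ.ringHomComp (starRingEnd ℂ)) 1 / (c : ℂ))) :=
  stmt_14_general q hq χ hprim c hc hqc d hd
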